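/- Let X and Y be locally compact, σ-compact metrizable topological spaces, and let G act on X and on Y by metric-independent expansive (MIE) actions. Then the induced action of G on the disjoint union X ⊔ Y (acting componentwise) is metric-independent expansive. -/
import Mathlib


/-- An action `φ` is expansive with respect to a distance function `d`. -/
def ExpansiveWith {G X : Type*} (φ : G → X → X) (d : X → X → ℝ) : Prop :=
  ∃ c > 0, ∀ x y : X, x ≠ y → ∃ g : G, c < d (φ g x) (φ g y)

/-- Metric-independent expansiveness: expansive with respect to every metric
compatible with the topology. -/
def MIE {G X : Type*} [tX : TopologicalSpace X] (φ : G → X → X) : Prop :=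
  ∀ m : MetricSpace X, m.toUniformSpace.toTopologicalSpace = tX →
    ExpansiveWith φ (fun x y => @dist X m.toDist x y)

/-- Auxiliary: if `φ` is MIE on `X` and `i : X → Z` realizes the topology of `X` inside a
metric space `Z`, and `C` is a closed set disjoint from the range of `i`, then there is a
uniform expansiveness constant separating `i`-images and also keeping (for some group element)
the sum of the distances to `C` large. -/
theorem mie_aux {G X Z : Type*} [tX : TopologicalSpace X] [MetricSpace Z]
    (φ : G → X → X) (hX : MIE φ) (i : X → Z) (hi : Function.Injective i)
    (hind : tX = TopologicalSpace.induced i UniformSpace.toTopologicalSpace)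
    (C : Set Z) (hC : IsClosed C) (hdisj : ∀ x, i x ∉ C) :
    ∃ c > 0, ∀ x x' : X, x ≠ x' → ∃ g : G,
      c < dist (i (φ g x)) (i (φ g x')) ∧
      ∀ z ∈ C, ∀ z' ∈ C, c < dist (i (φ g x)) z + dist (i (φ g x')) z' := by
  classical
  -- the "gap" function: distance to `C` (or 1 if `C` is empty)
  set A : X → ℝ := fun x => if C.Nonempty then Metric.infDist (i x) C else 1 with hA
  have hApos : ∀ x, 0 < A x := by
    intro x
    rw [hA]
    split_ifs with h
    · exact (hC.notMem_iff_infDist_pos h).1 (hdisj x)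
    · exact one_pos
  have hAle : ∀ x z, z ∈ C → A x ≤ dist (i x) z := by
    intro x z hz
    rw [hA]
    simp only [if_pos (show C.Nonempty from ⟨z, hz⟩)]
    exact Metric.infDist_le_dist_of_mem hz
  have hAlip : ∀ x x', A x ≤ A x' + dist (i x) (i x') := by
    intro x x'
    rw [hA]
    split_ifs with h
    · exact Metric.infDist_le_infDist_add_dist
    · simp only []
      linarith [dist_nonneg (x := i x) (y := i x')]
  -- the modified metric on X
  have dself : ∀ x, min (dist (i x) (i x)) (A x + A x) = 0 := by
    intro x
    rw [dist_self]
    exact min_eq_left (by linarith [hApos x])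
  have dcomm : ∀ x x', min (dist (i x) (i x')) (A x + A x')
      = min (dist (i x') (i x)) (A x' + A x) := by
    intro x x'
    rw [dist_comm, add_comm]
  have dtri : ∀ x y z, min (dist (i x) (i z)) (A x + A z)
      ≤ min (dist (i x) (i y)) (A x + A y) + min (dist (i y) (i z)) (A y + A z) := by
    intro x y z
    have l1 := min_le_left (dist (i x) (i z)) (A x + A z)
    have l2 := min_le_right (dist (i x) (i z)) (A x + A z)
    have t := dist_triangle (i x) (i y) (i z)
    have lipx := hAlip x y
    have lipz := hAlip z y
    have e3 : dist (i z) (i y) = dist (i y) (i z) := dist_comm _ _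
    have hAy := (hApos y).le
    rcases min_cases (dist (i x) (i y)) (A x + A y) with ⟨e1, -⟩ | ⟨e1, -⟩ <;>
      rcases min_cases (dist (i y) (i z)) (A y + A z) with ⟨e2, -⟩ | ⟨e2, -⟩ <;>
      rw [e1, e2] <;> linarith
  have deq : ∀ x x', min (dist (i x) (i x')) (A x + A x') = 0 → x = x' := by
    intro x x' h0
    rcases min_cases (dist (i x) (i x')) (A x + A x') with ⟨e, -⟩ | ⟨e, -⟩
    · rw [e] at h0
      exact hi (dist_eq_zero.1 h0)
    · rw [e] at h0
      exact absurd h0 (by linarith [hApos x, hApos x'])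
  have H' : ∀ s : Set X, IsOpen s ↔
      ∀ x ∈ s, ∃ ε > 0, ∀ y, min (dist (i x) (i y)) (A x + A y) < ε → y ∈ s := by
    intro s
    rw [hind, isOpen_induced_iff]
    constructor
    · rintro ⟨U, hU, rfl⟩ x hx
      obtain ⟨ε, hε, hball⟩ := Metric.isOpen_iff.1 hU (i x) hx
      refine ⟨min ε (A x), lt_min hε (hApos x), fun y hy => ?_⟩
      have h1 : dist (i x) (i y) < ε := by
        rcases min_lt_iff.1 hy with h' | h'
        · exact lt_of_lt_of_le h' (min_le_left _ _)
        · exact absurd h' (by linarith [hApos y, min_le_right ε (A x)])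
      exact hball (by rw [Metric.mem_ball, dist_comm]; exact h1)
    · intro hs
      refine ⟨⋃ x ∈ s, ⋃ ε ∈ {ε : ℝ | 0 < ε ∧
          ∀ y, min (dist (i x) (i y)) (A x + A y) < ε → y ∈ s}, Metric.ball (i x) ε, ?_, ?_⟩
      · exact isOpen_biUnion fun x _ => isOpen_biUnion fun ε _ => Metric.isOpen_ball
      · ext x'
        simp only [Set.mem_preimage, Set.mem_iUnion, Metric.mem_ball, Set.mem_setOf_eq,
          exists_prop]
        constructor
        · rintro ⟨x, hx, ε, ⟨hε, hp⟩, hb⟩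
          exact hp x' (lt_of_le_of_lt (min_le_left _ _) (by rw [dist_comm]; exact hb))
        · intro hx'
          obtain ⟨ε, hε, hp⟩ := hs x' hx'
          exact ⟨x', hx', ε, ⟨hε, hp⟩, by rw [dist_self]; exact hε⟩
  obtain ⟨c, hc, hexp⟩ := hX (MetricSpace.ofDistTopology
    (fun x x' => min (dist (i x) (i x')) (A x + A x')) dself dcomm dtri H' deq) rfl
  refine ⟨c, hc, fun x x' hne => ?_⟩
  obtain ⟨g, hg⟩ := hexp x x' hne
  have hg' : c < min (dist (i (φ g x)) (i (φ g x'))) (A (φ g x) + A (φ g x')) := hg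
  obtain ⟨h1, h2⟩ := lt_min_iff.1 hg'
  refine ⟨g, h1, fun z hz z' hz' => ?_⟩
  have b1 := hAle (φ g x) z hz
  have b2 := hAle (φ g x') z' hz'
  linarith

/-- If a group `G` acts by metric-independent expansive actions on locally compact,
σ-compact metrizable spaces `X` and `Y`, then the componentwise action on the
disjoint union `X ⊔ Y` is metric-independent expansive. -/
theorem mie_coproduct {G X Y : Type*} [Group G]
    [TopologicalSpace X] [TopologicalSpace.MetrizableSpace X] [LocallyCompactSpace X]
    [SigmaCompactSpace X]
    [TopologicalSpace Y] [TopologicalSpace.MetrizableSpace Y] [LocallyCompactSpace Y]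
    [SigmaCompactSpace Y]
    (φ : G → X → X) (hφone : ∀ x : X, φ 1 x = x)
    (hφmul : ∀ (g h : G) (x : X), φ (g * h) x = φ g (φ h x))
    (ψ : G → Y → Y) (hψone : ∀ y : Y, ψ 1 y = y)
    (hψmul : ∀ (g h : G) (y : Y), ψ (g * h) y = ψ g (ψ h y))
    (hX : MIE φ) (hY : MIE ψ) :
    MIE (fun (g : G) (z : X ⊕ Y) => Sum.map (φ g) (ψ g) z) := by
  intro m h
  classical
  letI := m
  obtain ⟨c₁, hc₁, H₁⟩ := mie_aux φ hX (Sum.inl : X → X ⊕ Y) Sum.inl_injective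
    (by rw [h]; exact Topology.IsEmbedding.inl.eq_induced)
    (Set.range Sum.inr) (by rw [h]; exact isClosed_range_inr) (by simp)
  obtain ⟨c₂, hc₂, H₂⟩ := mie_aux ψ hY (Sum.inr : Y → X ⊕ Y) Sum.inr_injective
    (by rw [h]; exact Topology.IsEmbedding.inr.eq_induced)
    (Set.range Sum.inl) (by rw [h]; exact isClosed_range_inl) (by simp)
  set c₀ : ℝ := min c₁ c₂ / 2 with hc₀def
  have hmin : 0 < min c₁ c₂ := lt_min hc₁ hc₂
  have hc₀ : 0 < c₀ := by positivity
  -- at most one "bad" pair whose orbits stay `c₀`-close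
  have key : ∀ x y x' y', (∀ g : G, dist (Sum.inl (φ g x) : X ⊕ Y) (Sum.inr (ψ g y)) ≤ c₀) →
      (∀ g : G, dist (Sum.inl (φ g x') : X ⊕ Y) (Sum.inr (ψ g y')) ≤ c₀) →
      x = x' ∧ y = y' := by
    intro x y x' y' hxy hxy'
    constructor
    · by_contra hne
      obtain ⟨g, -, hgap⟩ := H₁ x x' hne
      have hg := hgap (Sum.inr (ψ g y)) ⟨_, rfl⟩ (Sum.inr (ψ g y')) ⟨_, rfl⟩
      have h1 := hxy g
      have h2 := hxy' g
      have := min_le_left c₁ c₂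
      linarith
    · by_contra hne
      obtain ⟨g, -, hgap⟩ := H₂ y y' hne
      have hg := hgap (Sum.inl (φ g x)) ⟨_, rfl⟩ (Sum.inl (φ g x')) ⟨_, rfl⟩
      have e1 : dist (Sum.inr (ψ g y) : X ⊕ Y) (Sum.inl (φ g x))
          = dist (Sum.inl (φ g x) : X ⊕ Y) (Sum.inr (ψ g y)) := dist_comm _ _
      have e2 : dist (Sum.inr (ψ g y') : X ⊕ Y) (Sum.inl (φ g x'))
          = dist (Sum.inl (φ g x') : X ⊕ Y) (Sum.inr (ψ g y')) := dist_comm _ _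
      have h1 := hxy g
      have h2 := hxy' g
      have := min_le_right c₁ c₂
      linarith
  -- a constant working for all cross pairs
  have cross : ∃ c > 0, c ≤ c₀ ∧
      ∀ x y, ∃ g : G, c < dist (Sum.inl (φ g x) : X ⊕ Y) (Sum.inr (ψ g y)) := by
    by_cases hbad : ∃ x y, ∀ g : G, dist (Sum.inl (φ g x) : X ⊕ Y) (Sum.inr (ψ g y)) ≤ c₀
    · obtain ⟨x₀, y₀, h₀⟩ := hbad
      have hε : 0 < dist (Sum.inl x₀ : X ⊕ Y) (Sum.inr y₀) := dist_pos.2 (by simp)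
      refine ⟨min c₀ (dist (Sum.inl x₀ : X ⊕ Y) (Sum.inr y₀) / 2),
        lt_min hc₀ (by linarith), min_le_left _ _, ?_⟩
      intro x y
      by_cases hB : ∀ g : G, dist (Sum.inl (φ g x) : X ⊕ Y) (Sum.inr (ψ g y)) ≤ c₀
      · obtain ⟨ex, ey⟩ := key x y x₀ y₀ hB h₀
        subst ex; subst ey
        refine ⟨1, ?_⟩
        rw [hφone, hψone]
        exact lt_of_le_of_lt (min_le_right _ _) (by linarith)
      · push_neg at hB
        obtain ⟨g, hg⟩ := hB
        exact ⟨g, lt_of_le_of_lt (min_le_left _ _) hg⟩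
    · push_neg at hbad
      exact ⟨c₀, hc₀, le_refl _, fun x y => hbad x y⟩
  obtain ⟨c, hc, hcc₀, hcross⟩ := cross
  have hcc₁ : c < c₁ := by have := min_le_left c₁ c₂; linarith
  have hcc₂ : c < c₂ := by have := min_le_right c₁ c₂; linarith
  refine ⟨c, hc, fun z w hzw => ?_⟩
  cases z with
  | inl x =>
    cases w with
    | inl x' =>
      have hne : x ≠ x' := by simpa using hzw
      obtain ⟨g, hg, -⟩ := H₁ x x' hne
      exact ⟨g, lt_trans hcc₁ hg⟩
    | inr y =>
      obtain ⟨g, hg⟩ := hcross x y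
      exact ⟨g, hg⟩
  | inr y =>
    cases w with
    | inl x =>
      obtain ⟨g, hg⟩ := hcross x y
      refine ⟨g, ?_⟩
      show c < dist (Sum.inr (ψ g y) : X ⊕ Y) (Sum.inl (φ g x))
      rw [dist_comm]
      exact hg
    | inr y' =>
      have hne : y ≠ y' := by simpa using hzw
      obtain ⟨g, hg, -⟩ := H₂ y y' hne
      exact ⟨g, lt_trans hcc₂ hg⟩
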